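/- arXiv:1405.0045 — 2 statements merged into one kernel-verified Lean document; each statement's English description precedes it below -/
import Mathlib

section
/- Let G be a finite abelian group and D ⊂ G a GSHDS, and χ a nonprincipal character of G. Then χ(D) satisfies the quadratic equation X² + X + (k₀ − λ) = 0; in particular, if k₀ = 0 then χ(D) = (−1 ± √v)/2, and if k₀ = k then χ(D) = (−1 ± √(−v))/2, where v = |G|. -/
/-!
Evaluating the two group-ring identities at a nonprincipal character `χ` kills `G(x)`, so
`S = χ(D)` and `T = χ(D(x^{n₀}))` satisfy `S T = k₀ - λ` and `S + T = -1`; eliminating `T` gives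
the quadratic. Its discriminant `1 - 4(k₀ - λ)` is computed from the principal character, which
gives `k² = k₀ - λ + λv` and `2k = v - 1`: for `k₀ = 0` this forces `v = 4λ + 1`, and for
`k₀ = k` it forces `v = 4λ + 3`, so the discriminant is `v`, resp. `-v`.
-/

open Finset

/-- `DS n D` represents `D(xⁿ) = ∑_{g ∈ D} x^{n·g}` in the integral group algebra `ℤ[G]`. -/
noncomputable def DS {G : Type} [AddCommGroup G] (n : ℤ) (D : Finset G) :
    AddMonoidAlgebra ℤ G := ∑ g ∈ D, AddMonoidAlgebra.single (n • g) 1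

/-- `GS G` represents `G(x) = ∑_{g ∈ G} x^g` in `ℤ[G]`. -/
noncomputable def GS (G : Type) [AddCommGroup G] [Fintype G] :
    AddMonoidAlgebra ℤ G := ∑ g : G, AddMonoidAlgebra.single g 1

section CharEval

variable {G R : Type} [AddCommGroup G] [CommRing R]

noncomputable def charEval (ψ : AddChar G R) : AddMonoidAlgebra ℤ G →ₐ[ℤ] R :=
  AddMonoidAlgebra.lift ℤ R G ψ.toMonoidHomEquiv

@[simp]
lemma charEval_single (ψ : AddChar G R) (a : G) :
    charEval ψ (AddMonoidAlgebra.single a 1) = ψ a := by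
  simp [charEval, AddMonoidAlgebra.lift_single]

@[simp]
lemma charEval_DS (ψ : AddChar G R) (n : ℤ) (D : Finset G) :
    charEval ψ (DS n D) = ∑ g ∈ D, ψ (n • g) := by
  simp [DS]

@[simp]
lemma charEval_GS [Fintype G] (ψ : AddChar G R) :
    charEval ψ (GS G) = ∑ g : G, ψ g := by
  simp [GS]

lemma charEval_GS_of_ne_zero [Fintype G] [IsDomain R] {ψ : AddChar G R} (hψ : ψ ≠ 0) :
    charEval ψ (GS G) = 0 := by
  classical
  simp [AddChar.sum_eq_ite, hψ]

end CharEval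

section GroupRingIdentities

variable {G R : Type} [AddCommGroup G] [Fintype G] [CommRing R] [IsDomain R]
  {D : Finset G} {n₀ k₀ lam : ℤ}

lemma charSum_quadratic
    (h1 : DS 1 D * DS n₀ D = (k₀ - lam) • (1 : AddMonoidAlgebra ℤ G) + lam • GS G)
    (h2 : DS 1 D + DS n₀ D = GS G - 1) {ψ : AddChar G R} (hψ : ψ ≠ 0) :
    (∑ g ∈ D, ψ g) ^ 2 + (∑ g ∈ D, ψ g) + ((k₀ : R) - lam) = 0 := by
  have hG := charEval_GS_of_ne_zero hψ
  have hprod := congrArg (charEval ψ) h1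
  have hsum := congrArg (charEval ψ) h2
  simp only [map_mul, map_add, map_sub, map_one, map_intCast, Int.cast_sub, hG, charEval_DS,
    one_smul, zsmul_eq_mul, mul_one, mul_zero, add_zero, zero_sub] at hprod hsum
  linear_combination -hprod + (∑ g ∈ D, ψ g) * hsum

lemma card_mul_card_eq
    (h1 : DS 1 D * DS n₀ D = (k₀ - lam) • (1 : AddMonoidAlgebra ℤ G) + lam • GS G) :
    (D.card : ℤ) * D.card = k₀ - lam + lam * Fintype.card G := by
  simpa using congrArg (charEval (1 : AddChar G ℤ)) h1

lemma card_add_card_eq (h2 : DS 1 D + DS n₀ D = GS G - 1) :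
    (D.card : ℤ) + D.card = Fintype.card G - 1 := by
  simpa using congrArg (charEval (1 : AddChar G ℤ)) h2

lemma card_pos_of_nontrivial [Nontrivial G] (h2 : DS 1 D + DS n₀ D = GS G - 1) :
    0 < (D.card : ℤ) := by
  have := card_add_card_eq h2
  have := Fintype.one_lt_card (α := G)
  omega

lemma discrim_eq_card_of_k₀_eq_zero [Nontrivial G]
    (h1 : DS 1 D * DS n₀ D = (k₀ - lam) • (1 : AddMonoidAlgebra ℤ G) + lam • GS G)
    (h2 : DS 1 D + DS n₀ D = GS G - 1) (hk₀ : k₀ = 0) :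
    1 - 4 * (k₀ - lam) = Fintype.card G := by
  have hprod := card_mul_card_eq h1
  have hsum := card_add_card_eq h2
  have hk : (D.card : ℤ) = 2 * lam := by
    refine mul_left_cancel₀ (card_pos_of_nontrivial h2).ne' ?_
    linear_combination hprod - lam * hsum + hk₀
  omega

lemma discrim_eq_neg_card_of_k₀_eq_card [Nontrivial G]
    (h1 : DS 1 D * DS n₀ D = (k₀ - lam) • (1 : AddMonoidAlgebra ℤ G) + lam • GS G)
    (h2 : DS 1 D + DS n₀ D = GS G - 1) (hk₀ : k₀ = D.card) :
    1 - 4 * (k₀ - lam) = -Fintype.card G := by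
  have hprod := card_mul_card_eq h1
  have hsum := card_add_card_eq h2
  have hk : (D.card : ℤ) - 1 = 2 * lam := by
    refine mul_left_cancel₀ (card_pos_of_nontrivial h2).ne' ?_
    linear_combination hprod - lam * hsum + hk₀
  omega

end GroupRingIdentities

lemma exists_sq_eq_discrim_of_quadratic {K : Type} [Field K] [NeZero (2 : K)] {x c : K}
    (hx : x ^ 2 + x + c = 0) :
    ∃ s : K, s ^ 2 = 1 - 4 * c ∧ (x = (-1 + s) / 2 ∨ x = (-1 - s) / 2) :=
  ⟨2 * x + 1, by linear_combination 4 * hx, Or.inl (by field_simp; ring)⟩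

theorem stmt_8_general (G : Type) [AddCommGroup G] [Fintype G]
    (D : Finset G) (n₀ k₀ lam : ℤ)
    (h1 : DS 1 D * DS n₀ D
        = (k₀ - lam) • (1 : AddMonoidAlgebra ℤ G) + lam • GS G)
    (h2 : DS 1 D + DS n₀ D = GS G - 1)
    (χ : AddChar G ℂ) (hχ : ∃ g : G, χ g ≠ 1) :
    (∑ g ∈ D, χ g) ^ 2 + (∑ g ∈ D, χ g) + ((k₀ : ℂ) - (lam : ℂ)) = 0 ∧
    (k₀ = 0 → ∃ s : ℂ, s ^ 2 = (Fintype.card G : ℂ) ∧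
      ((∑ g ∈ D, χ g) = (-1 + s) / 2 ∨ (∑ g ∈ D, χ g) = (-1 - s) / 2)) ∧
    (k₀ = (D.card : ℤ) → ∃ s : ℂ, s ^ 2 = -(Fintype.card G : ℂ) ∧
      ((∑ g ∈ D, χ g) = (-1 + s) / 2 ∨ (∑ g ∈ D, χ g) = (-1 - s) / 2)) := by
  obtain ⟨g, hg⟩ := hχ
  have : Nontrivial G := nontrivial_of_ne g 0 (by rintro rfl; simp at hg)
  have hquad := charSum_quadratic h1 h2 (AddChar.ne_zero_iff.2 ⟨g, hg⟩)
  obtain ⟨s, hs, hroot⟩ := exists_sq_eq_discrim_of_quadratic hquad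
  refine ⟨hquad, fun hk₀ => ⟨s, ?_, hroot⟩, fun hk₀ => ⟨s, ?_, hroot⟩⟩ <;> rw [hs]
  · exact_mod_cast discrim_eq_card_of_k₀_eq_zero h1 h2 hk₀
  · exact_mod_cast discrim_eq_neg_card_of_k₀_eq_card h1 h2 hk₀

/-- For a GSHDS D and any nonprincipal character χ of G, χ(D) satisfies
X² + X + (k₀ − λ) = 0; if k₀ = 0 then χ(D) = (−1 ± √v)/2, and if k₀ = k then
χ(D) = (−1 ± √(−v))/2, where v = |G|. -/
theorem stmt_8 (G : Type) [AddCommGroup G] [Fintype G]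
    (D : Finset G) (n₀ k₀ lam : ℤ)
    (hunit : IsUnit (n₀ : ZMod (AddMonoid.exponent G)))
    (hnres : ¬ ∃ m : ZMod (AddMonoid.exponent G),
      m ^ 2 = (n₀ : ZMod (AddMonoid.exponent G)))
    (hk : (D.card : ℤ) = ((Fintype.card G : ℤ) - 1) / 2)
    (h1 : DS 1 D * DS n₀ D
        = (k₀ - lam) • (1 : AddMonoidAlgebra ℤ G) + lam • GS G)
    (h2 : DS 1 D + DS n₀ D = GS G - 1)
    (χ : AddChar G ℂ) (hχ : ∃ g : G, χ g ≠ 1) :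
    (∑ g ∈ D, χ g) ^ 2 + (∑ g ∈ D, χ g) + ((k₀ : ℂ) - (lam : ℂ)) = 0 ∧
    (k₀ = 0 → ∃ s : ℂ, s ^ 2 = (Fintype.card G : ℂ) ∧
      ((∑ g ∈ D, χ g) = (-1 + s) / 2 ∨ (∑ g ∈ D, χ g) = (-1 - s) / 2)) ∧
    (k₀ = (D.card : ℤ) → ∃ s : ℂ, s ^ 2 = -(Fintype.card G : ℂ) ∧
      ((∑ g ∈ D, χ g) = (-1 + s) / 2 ∨ (∑ g ∈ D, χ g) = (-1 - s) / 2)) :=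
  stmt_8_general G D n₀ k₀ lam h1 h2 χ hχ
end

section
/- Let G be an abelian p-group of order p^β (p odd) and D a QRS in G. If p^k divides the difference coefficient d_G(χ, D) for every nonprincipal character χ of G, then 2k + 1 ≤ β. -/
/-!
Coefficientwise, `D(x) + D(x^{n₀}) = G(x) - 1` says that `0 ∉ D` and `2|D| + 1 = |G|`. The
coefficient function of `2D + 1` has Fourier transform `χ ↦ 2χ(D) + 1`, which is `|G|` at the
trivial character and `d χ · s₀` at the others, where `|s₀|² = p`. Parseval then gives
`p · ∑_{χ ≠ 1} (d χ)² = |G| (|G| - 1)`. No `d χ` vanishes, because `-1/2` is not an algebraic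
integer, so each of the `|G| - 1` terms is at least `p^{2k}`, whence `p^{2k+1} ≤ |G| = p^β`.
-/

open Finset

section GroupAlgebra

variable {G : Type} [AddCommGroup G] [DecidableEq G]

lemma coeff_DS_apply (n : ℤ) (D : Finset G) (g : G) :
    (DS n D).coeff g = ∑ h ∈ D, if n • h = g then 1 else 0 := by
  simp only [DS, AddMonoidAlgebra.coeff_sum, AddMonoidAlgebra.coeff_single,
    Finsupp.finsetSum_apply, Finsupp.single_apply]

lemma coeff_DS_nonneg (n : ℤ) (D : Finset G) (g : G) : 0 ≤ (DS n D).coeff g := by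
  rw [coeff_DS_apply]
  exact sum_nonneg fun _ _ => by split_ifs <;> norm_num

lemma coeff_DS_one_apply (D : Finset G) (g : G) :
    (DS 1 D).coeff g = if g ∈ D then 1 else 0 := by
  simp [coeff_DS_apply]

variable [Fintype G]

lemma sum_coeff_DS (n : ℤ) (D : Finset G) : ∑ g, (DS n D).coeff g = #D := by
  simp_rw [coeff_DS_apply]
  rw [sum_comm]
  simp

lemma coeff_GS_apply (g : G) : (GS G).coeff g = 1 := by
  simp [GS, AddMonoidAlgebra.coeff_sum, AddMonoidAlgebra.coeff_single, Finsupp.single_apply]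

variable {D : Finset G} {n : ℤ}

lemma zero_notMem_of_DS_add_DS_eq (h : DS 1 D + DS n D = GS G - 1) : (0 : G) ∉ D := by
  intro h0
  have h := congrArg (fun x => x.coeff 0) h
  simp only [AddMonoidAlgebra.coeff_add, AddMonoidAlgebra.coeff_sub, Finsupp.add_apply,
    Finsupp.sub_apply, coeff_DS_one_apply, if_pos h0, coeff_GS_apply,
    AddMonoidAlgebra.coeff_one_zero] at h
  linarith [coeff_DS_nonneg n D 0]

lemma two_mul_card_add_one_of_DS_add_DS_eq (h : DS 1 D + DS n D = GS G - 1) :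
    2 * #D + 1 = Fintype.card G := by
  have h := congrArg (fun x => ∑ g, x.coeff g) h
  simp only [AddMonoidAlgebra.coeff_add, AddMonoidAlgebra.coeff_sub, Finsupp.add_apply,
    Finsupp.sub_apply, sum_add_distrib, sum_sub_distrib, sum_coeff_DS, coeff_GS_apply,
    AddMonoidAlgebra.one_def, AddMonoidAlgebra.coeff_single, Finsupp.single_apply, sum_ite_eq,
    mem_univ, if_true, sum_const, card_univ, Int.nsmul_eq_mul, mul_one] at h
  omega

end GroupAlgebra

section Characters

variable {G : Type} [AddCommGroup G] [Fintype G]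

lemma sum_norm_sq_sum_mul_addChar (f : G → ℂ) :
    ∑ χ : AddChar G ℂ, ‖∑ g, f g * χ g‖ ^ 2 = Fintype.card G * ∑ g, ‖f g‖ ^ 2 := by
  classical
  apply Complex.ofReal_injective
  push_cast
  simp_rw [← Complex.mul_conj', map_sum, map_mul, ← AddChar.map_neg_eq_conj, sum_mul_sum]
  calc ∑ χ : AddChar G ℂ, ∑ g, ∑ h, f g * χ g * ((starRingEnd ℂ) (f h) * χ (-h))
      = ∑ g, ∑ h, f g * (starRingEnd ℂ) (f h) * ∑ χ : AddChar G ℂ, χ (g - h) := by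
        rw [sum_comm]
        refine sum_congr rfl fun g _ => ?_
        rw [sum_comm]
        refine sum_congr rfl fun h _ => ?_
        rw [mul_sum]
        refine sum_congr rfl fun χ _ => ?_
        rw [sub_eq_add_neg, AddChar.map_add_eq_mul]
        ring
    _ = Fintype.card G * ∑ g, f g * (starRingEnd ℂ) (f g) := by
        simp_rw [AddChar.sum_apply_eq_ite, sub_eq_zero, mul_ite, mul_zero, sum_ite_eq, mem_univ,
          if_true, mul_sum]
        exact sum_congr rfl fun g _ => mul_comm _ _

lemma isIntegral_addChar_apply (χ : AddChar G ℂ) (g : G) : IsIntegral ℤ (χ g) := by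
  refine IsIntegral.of_pow (Fintype.card_pos (α := G)) ?_
  rw [← AddChar.map_nsmul_eq_pow, card_nsmul_eq_zero, AddChar.map_zero_eq_one]
  exact isIntegral_one

lemma two_mul_sum_addChar_add_one_ne_zero (D : Finset G) (χ : AddChar G ℂ) :
    2 * ∑ g ∈ D, χ g + 1 ≠ 0 := by
  intro h
  have hint : IsIntegral ℤ (∑ g ∈ D, χ g) :=
    IsIntegral.sum _ fun g _ => isIntegral_addChar_apply χ g
  obtain ⟨m, hm⟩ := (hint.exists_int_iff_exists_rat).mp
    ⟨-1 / 2, by push_cast; linear_combination h / 2⟩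
  rw [hm] at h
  have : 2 * m + 1 = 0 := by exact_mod_cast h
  omega

variable [DecidableEq G] {D : Finset G}

lemma sum_norm_sq_two_mul_sum_addChar_add_one (hD0 : (0 : G) ∉ D) :
    ∑ χ : AddChar G ℂ, ‖2 * ∑ g ∈ D, χ g + 1‖ ^ 2 = Fintype.card G * (4 * #D + 1) := by
  have hnorm : ∀ g : G, ‖(2 * (if g ∈ D then 1 else 0) + if g = 0 then 1 else 0 : ℂ)‖ ^ 2
      = 4 * (if g ∈ D then 1 else 0) + if g = 0 then 1 else 0 := by
    intro g
    by_cases hg : g = 0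
    · subst hg
      simp [hD0]
    · split_ifs <;> norm_num
  convert sum_norm_sq_sum_mul_addChar
    fun g : G => (2 * (if g ∈ D then 1 else 0) + if g = 0 then 1 else 0 : ℂ) using 3 with χ
  · simp [add_mul, sum_add_distrib, ← mul_sum, ite_mul, sum_ite_mem]
  · simp_rw [hnorm]
    simp [sum_add_distrib, mul_comm]

lemma mul_sum_sq_eq_card_mul_card_sub_one {p : ℕ} {s0 : ℂ} {d : AddChar G ℂ → ℤ}
    (hD0 : (0 : G) ∉ D) (hcard : 2 * #D + 1 = Fintype.card G) (hs0 : ‖s0‖ ^ 2 = p)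
    (hd : ∀ χ : AddChar G ℂ, χ ≠ 0 → 2 * ∑ g ∈ D, χ g + 1 = d χ * s0) :
    (p : ℤ) * ∑ χ ∈ univ.erase 0, d χ ^ 2 = Fintype.card G * (Fintype.card G - 1) := by
  have h := sum_norm_sq_two_mul_sum_addChar_add_one hD0
  rw [← add_sum_erase _ _ (mem_univ 0)] at h
  have h0 : ‖2 * ∑ g ∈ D, (0 : AddChar G ℂ) g + 1‖ ^ 2 = (Fintype.card G : ℝ) ^ 2 := by
    rw [← hcard, ← Complex.norm_natCast]
    simp
  have hχ : ∀ χ ∈ univ.erase (0 : AddChar G ℂ), ‖2 * ∑ g ∈ D, χ g + 1‖ ^ 2 = p * d χ ^ 2 := by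
    intro χ hχ
    rw [hd χ (ne_of_mem_erase hχ), norm_mul, mul_pow, hs0, Complex.norm_intCast, sq_abs, mul_comm]
  rw [h0, sum_congr rfl hχ, ← mul_sum] at h
  have hcard' : (2 * #D + 1 : ℝ) = Fintype.card G := by exact_mod_cast hcard
  have : (p : ℝ) * ∑ χ ∈ univ.erase 0, (d χ : ℝ) ^ 2 = Fintype.card G * (Fintype.card G - 1) := by
    linear_combination h + 2 * Fintype.card G * hcard'
  exact_mod_cast this

end Characters

lemma card_mul_sq_le_sum_sq {ι : Type*} (s : Finset ι) {d : ι → ℤ} {q : ℤ}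
    (hdvd : ∀ i ∈ s, q ∣ d i) (hne : ∀ i ∈ s, d i ≠ 0) : #s * q ^ 2 ≤ ∑ i ∈ s, d i ^ 2 := by
  rw [← nsmul_eq_mul]
  refine card_nsmul_le_sum s _ _ fun i hi => sq_le_sq.mpr ?_
  rw [Int.abs_eq_natAbs, Int.abs_eq_natAbs]
  exact_mod_cast Int.natAbs_le_of_dvd_ne_zero (hdvd i hi) (hne i hi)

lemma norm_sq_eq_of_sq_eq_neg_one_pow_mul {z : ℂ} {m p : ℕ} (h : z ^ 2 = (-1) ^ m * p) :
    ‖z‖ ^ 2 = p := by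
  simpa using congrArg norm h

lemma one_lt_card_of_exponent_eq_of_not_isSquare {G : Type} [AddCommGroup G] [Fintype G] {m : ℕ}
    {a : ZMod m} (hexp : AddMonoid.exponent G = m) (ha : ¬ ∃ b : ZMod m, b ^ 2 = a) :
    1 < Fintype.card G := by
  refine Nat.one_lt_iff_ne_zero_and_ne_one.mpr ⟨Fintype.card_ne_zero, fun h1 => ha ⟨0, ?_⟩⟩
  obtain rfl : m = 1 := by
    rw [← hexp, ← Nat.dvd_one, ← h1]
    exact AddGroup.exponent_dvd_card
  exact Subsingleton.elim _ _

theorem stmt_14_general (p s β k : ℕ) (hp : p.Prime)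
    (G : Type) [AddCommGroup G] [Fintype G]
    (hcard : Fintype.card G = p ^ β)
    (hexp : AddMonoid.exponent G = p ^ s)
    (D : Finset G) (n₀ : ℤ)
    (hnres : ¬ ∃ m : ZMod (p ^ s), m ^ 2 = (n₀ : ZMod (p ^ s)))
    (hskew : DS 1 D + DS n₀ D = GS G - 1)
    (d : AddChar G ℂ → ℤ) (s0 : ℂ)
    (hs0 : s0 ^ 2 = (-1 : ℂ) ^ ((p - 1) / 2) * p)
    (hd : ∀ χ : AddChar G ℂ, (∃ g : G, χ g ≠ 1) →
      (∑ g ∈ D, χ g) = (-1 + (d χ : ℂ) * s0) / 2)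
    (hdiv : ∀ χ : AddChar G ℂ, (∃ g : G, χ g ≠ 1) → (p : ℤ) ^ k ∣ d χ) :
    2 * k + 1 ≤ β := by
  classical
  have hG := one_lt_card_of_exponent_eq_of_not_isSquare hexp hnres
  have hd' : ∀ χ : AddChar G ℂ, χ ≠ 0 → 2 * ∑ g ∈ D, χ g + 1 = d χ * s0 := fun χ hχ => by
    rw [hd χ (AddChar.ne_zero_iff.mp hχ)]
    ring
  have hsum := mul_sum_sq_eq_card_mul_card_sub_one (zero_notMem_of_DS_add_DS_eq hskew)
    (two_mul_card_add_one_of_DS_add_DS_eq hskew) (norm_sq_eq_of_sq_eq_neg_one_pow_mul hs0) hd'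
  have hlow := card_mul_sq_le_sum_sq (univ.erase 0) (q := (p : ℤ) ^ k)
    (fun χ hχ => hdiv χ (AddChar.ne_zero_iff.mp (ne_of_mem_erase hχ)))
    (fun χ hχ h0 => two_mul_sum_addChar_add_one_ne_zero D χ <| by
      simp [hd' χ (ne_of_mem_erase hχ), h0])
  rw [card_erase_of_mem (mem_univ _), card_univ, AddChar.card_eq, Nat.cast_sub hG.le,
    Nat.cast_one] at hlow
  have hpow : (p : ℤ) ^ (2 * k + 1) ≤ Fintype.card G := by
    refine le_of_mul_le_mul_right ?_ (by omega : (0 : ℤ) < Fintype.card G - 1)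
    calc (p : ℤ) ^ (2 * k + 1) * (Fintype.card G - 1)
        = p * ((Fintype.card G - 1) * ((p : ℤ) ^ k) ^ 2) := by ring
      _ ≤ p * ∑ χ ∈ univ.erase 0, d χ ^ 2 := by gcongr
      _ = Fintype.card G * (Fintype.card G - 1) := hsum
  rw [← Nat.pow_le_pow_iff_right hp.one_lt, ← hcard]
  exact_mod_cast hpow

/-- If D is a QRS in an abelian p-group G of order p^β (p odd) and p^k
divides the difference coefficient d_G(χ,D) for every nonprincipal character χ, then
2k + 1 ≤ β. -/
theorem stmt_14 (p s β k : ℕ) (hp : p.Prime) (hodd : Odd p)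
    (G : Type) [AddCommGroup G] [Fintype G]
    (hcard : Fintype.card G = p ^ β)
    (hexp : AddMonoid.exponent G = p ^ s)
    (D : Finset G) (n₀ : ℤ)
    (hunit : IsUnit (n₀ : ZMod (p ^ s)))
    (hnres : ¬ ∃ m : ZMod (p ^ s), m ^ 2 = (n₀ : ZMod (p ^ s)))
    (hskew : DS 1 D + DS n₀ D = GS G - 1)
    (hinv : ∀ n : ℤ, IsUnit (n : ZMod (p ^ s)) →
      (∃ m : ZMod (p ^ s), m ^ 2 = (n : ZMod (p ^ s))) → DS n D = DS 1 D)
    (d : AddChar G ℂ → ℤ) (s0 : ℂ)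
    (hs0 : s0 ^ 2 = (-1 : ℂ) ^ ((p - 1) / 2) * p)
    (hd : ∀ χ : AddChar G ℂ, (∃ g : G, χ g ≠ 1) →
      (∑ g ∈ D, χ g) = (-1 + (d χ : ℂ) * s0) / 2)
    (hdiv : ∀ χ : AddChar G ℂ, (∃ g : G, χ g ≠ 1) → (p : ℤ) ^ k ∣ d χ) :
    2 * k + 1 ≤ β :=
  stmt_14_general p s β k hp G hcard hexp D n₀ hnres hskew d s0 hs0 hd hdiv
end
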